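/- For the maximally correlated pair (X, Y) produced by the paper's correlated perturbation, for all w_i, w_j ∈ [c−r, c+r]: E[(X + Y − w_i − w_j)²] ≤ r²·α(ε)². By contrast, if X and Y with the same marginals are taken independent, then E[(X + Y − w_i − w_j)²] = 2r²·α(ε)² − (w_i − c)² − (w_j − c)², which equals 2r²·α(ε)² at w_i = w_j = c; hence the worst-case variance of the correlated pair is 50% of that of the independent pair. -/
import Mathlib


open Real Set

/-- `α(ε) = (e^ε + 1)/(e^ε − 1)`. -/
noncomputable def alphaFn (ε : ℝ) : ℝ := (Real.exp ε + 1) / (Real.exp ε - 1)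

/-- The LDP-FL marginal `P(output = c + rα(ε))` at input `u`. -/
noncomputable def qOf (c r ε u : ℝ) : ℝ := 1 / 2 + (u - c) / (2 * r * alphaFn ε)

/-- The output level associated with a Boolean outcome: `true ↦ c + rα(ε)`, `false ↦ c − rα(ε)`. -/
noncomputable def valOf (c r ε : ℝ) (b : Bool) : ℝ :=
  if b then c + r * alphaFn ε else c - r * alphaFn ε

/-- The joint pmf of the maximally (negatively) correlated pair `(X, Y)` produced by the
paper's correlated perturbation (the antitone coupling of the two LDP-FL marginals
`P_A = qOf c r ε wi`, `P_B = qOf c r ε wj`); `true ↦ c + rα(ε)`, `false ↦ c − rα(ε)`. -/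
noncomputable def jpCor (c r ε wi wj : ℝ) (b b' : Bool) : ℝ :=
  if b then
    (if b' then max 0 (qOf c r ε wi + qOf c r ε wj - 1)
     else min (qOf c r ε wi) (1 - qOf c r ε wj))
  else
    (if b' then min (1 - qOf c r ε wi) (qOf c r ε wj)
     else max 0 (1 - qOf c r ε wi - qOf c r ε wj))

/-- `E[(X + Y − wi − wj)²]` for the maximally correlated pair. -/
noncomputable def mseCor (c r ε wi wj : ℝ) : ℝ :=
  ∑ b : Bool, ∑ b' : Bool,
    jpCor c r ε wi wj b b' * (valOf c r ε b + valOf c r ε b' - wi - wj) ^ 2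

/-- `E[(X + Y − wi − wj)²]` for the independent pair with the same marginals. -/
noncomputable def mseInd (c r ε wi wj : ℝ) : ℝ :=
  ∑ b : Bool, ∑ b' : Bool,
    ((if b then qOf c r ε wi else 1 - qOf c r ε wi) *
      (if b' then qOf c r ε wj else 1 - qOf c r ε wj)) *
      (valOf c r ε b + valOf c r ε b' - wi - wj) ^ 2


/-- Core bound for the antitone coupling: `4a²·t(1−t) ≤ a²`-type inequality
in each regime of `t = p + q`. -/
lemma corAux (a p q : ℝ) :
    max 0 (p + q - 1) * (2 * a * (2 - p - q)) ^ 2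
      + min p (1 - q) * (2 * a * (p + q - 1)) ^ 2
      + min (1 - p) q * (2 * a * (p + q - 1)) ^ 2
      + max 0 (1 - p - q) * (2 * a * (p + q)) ^ 2 ≤ a ^ 2 := by
  rcases le_total (p + q) 1 with h | h
  · rw [max_eq_left (by linarith), min_eq_left (by linarith),
      min_eq_right (by linarith), max_eq_right (by linarith)]
    nlinarith [sq_nonneg (a * (1 - 2 * (p + q)))]
  · rw [max_eq_right (by linarith), min_eq_right (by linarith),
      min_eq_left (by linarith), max_eq_left (by linarith)]
    nlinarith [sq_nonneg (a * (2 * (p + q) - 3))]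

lemma qOf_param (c r ε p : ℝ) (h : r * alphaFn ε ≠ 0) :
    qOf c r ε (c + r * alphaFn ε * (2 * p - 1)) = p := by
  obtain ⟨hr, hα⟩ := mul_ne_zero_iff.mp h
  unfold qOf
  field_simp
  ring

/-- for all `wi, wj ∈ [c−r, c+r]` the maximally correlated pair has
`E[(X + Y − wi − wj)²] ≤ r²α(ε)²`, whereas the independent pair with the same marginals has
`E[(X + Y − wi − wj)²] = 2r²α(ε)² − (wi − c)² − (wj − c)²`, which equals `2r²α(ε)²` at
`wi = wj = c`; hence the worst-case variance of the correlated pair is 50% of the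
independent one's. -/
theorem stmt14 (c r ε : ℝ) (hr : 0 < r) (hε : 0 < ε) :
    (∀ wi ∈ Icc (c - r) (c + r), ∀ wj ∈ Icc (c - r) (c + r),
      mseCor c r ε wi wj ≤ r ^ 2 * alphaFn ε ^ 2) ∧
    (∀ wi ∈ Icc (c - r) (c + r), ∀ wj ∈ Icc (c - r) (c + r),
      mseInd c r ε wi wj =
        2 * r ^ 2 * alphaFn ε ^ 2 - (wi - c) ^ 2 - (wj - c) ^ 2) ∧
    mseInd c r ε c c = 2 * r ^ 2 * alphaFn ε ^ 2 := by
  have h1 : 1 < Real.exp ε := by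
    have := Real.exp_lt_exp.mpr hε
    rwa [Real.exp_zero] at this
  have hA : 1 < alphaFn ε := by
    unfold alphaFn
    rw [one_lt_div (by linarith)]
    linarith
  have ha : (0 : ℝ) < r * alphaFn ε := by positivity
  have hane : r * alphaFn ε ≠ 0 := ne_of_gt ha
  have hane2 : 2 * r * alphaFn ε ≠ 0 := by
    intro h; apply hane; nlinarith
  have hind : ∀ wi wj : ℝ, mseInd c r ε wi wj =
      2 * r ^ 2 * alphaFn ε ^ 2 - (wi - c) ^ 2 - (wj - c) ^ 2 := by
    intro wi wj
    simp only [mseInd, qOf, valOf, Fintype.sum_bool, if_true, if_false,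
      Bool.false_eq_true, ite_true, ite_false]
    field_simp
    ring
  refine ⟨?_, fun wi _ wj _ => hind wi wj, by rw [hind]; ring⟩
  intro wi _ wj _
  obtain ⟨p, hp⟩ : ∃ p, p = qOf c r ε wi := ⟨_, rfl⟩
  obtain ⟨q, hq⟩ : ∃ q, q = qOf c r ε wj := ⟨_, rfl⟩
  have hwi : wi = c + r * alphaFn ε * (2 * p - 1) := by
    rw [hp]; unfold qOf; field_simp; ring
  have hwj : wj = c + r * alphaFn ε * (2 * q - 1) := by
    rw [hq]; unfold qOf; field_simp; ring
  subst hwi hwj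
  have key := corAux (r * alphaFn ε) p q
  refine le_trans (le_of_eq ?_) (key.trans_eq (by ring))
  simp only [mseCor, jpCor, valOf, Fintype.sum_bool, if_true, if_false,
    Bool.false_eq_true, ite_true, ite_false, qOf_param c r ε p hane,
    qOf_param c r ε q hane]
  ring
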